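/- Let ξ ∈ ℝ. Let μ: ℝ → ℝ be Lipschitz on (−∞, ξ) and Lipschitz on (ξ, ∞), with one-sided limits μ(ξ+) and μ(ξ−) at ξ, and let σ: ℝ → ℝ be Lipschitz continuous with σ(ξ) ≠ 0. Set α := (μ(ξ−) − μ(ξ+)) / (2σ(ξ)²), let c > 0 satisfy 6|α|c < 1, let φ̄(x) = (x−ξ)|x−ξ| φ((x−ξ)/c), and let G(x) = x + α φ̄(x) (a bijection of ℝ). Define h: ℝ → ℝ by h(x) = μ(x)(1 + α φ̄'(x)) + (1/2) α φ̄''(x) σ(x)² for x ≠ ξ and h(ξ) = (μ(ξ+) + μ(ξ−))/2. Then the transformed drift μ̃ := h ∘ G⁻¹ is Lipschitz continuous on ℝ. -/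

import Mathlib

open Filter NNReal

/-- The bump function `φ(u) = (1+u)³(1-u)³` for `|u| ≤ 1` and `φ(u) = 0` otherwise. -/
noncomputable def phi (u : ℝ) : ℝ := if |u| ≤ 1 then (1 + u) ^ 3 * (1 - u) ^ 3 else 0

/-- `φ̄(x) = (x-ξ)|x-ξ| φ((x-ξ)/c)`. -/
noncomputable def phibar (ξ c : ℝ) (x : ℝ) : ℝ := (x - ξ) * |x - ξ| * phi ((x - ξ) / c)

/-- The transform `G(x) = x + α φ̄(x)`. -/
noncomputable def transformG (ξ α c : ℝ) (x : ℝ) : ℝ := x + α * phibar ξ c x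

/-!
`G = id + α φ̄` with `|φ̄'| ≤ 6c`, so under `6|α|c < 1` it is antilipschitz and, by Banach's
fixed point theorem, surjective; hence `G⁻¹` is Lipschitz, and it remains to show that `h` is.
With `ψ u = u² φ(u)` we have `φ̄ = ± c² ψ((x - ξ)/c)` on either side of `ξ`, so there
`h = μ (1 + α φ̄') ± (α/2) ψ''((x - ξ)/c) σ²`, where `φ̄'` and `ψ''` are Lipschitz
and vanish outside `[ξ - c, ξ + c]`, an interval on which `μ` and `σ` are bounded; so `h` is
Lipschitz on `(-∞, ξ)` and on `(ξ, ∞)`. Since `ψ''(0) = 2`, the second term jumps by `2ασ(ξ)² = μ(ξ-) - μ(ξ+)`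
at `ξ`, which cancels the jump of `μ`: `h` is continuous at `ξ`, hence Lipschitz on `ℝ`.
-/

open Set Metric Bornology Topology

section LipschitzTools

variable {α β : Type*} [PseudoMetricSpace α] [PseudoMetricSpace β]

theorem LipschitzOnWith.congr {f g : α → β} {s : Set α} {K : ℝ≥0}
    (hf : LipschitzOnWith K f s) (h : EqOn f g s) : LipschitzOnWith K g s :=
  fun x hx y hy => by rw [← h hx, ← h hy]; exact hf hx hy

theorem LipschitzOnWith.isBounded_image {f : α → β} {s : Set α} {K : ℝ≥0}
    (hf : LipschitzOnWith K f s) (hs : IsBounded s) : IsBounded (f '' s) := by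
  obtain ⟨C, hC⟩ := Metric.isBounded_iff.1 hs
  refine Metric.isBounded_iff.2 ⟨K * C, ?_⟩
  rintro _ ⟨x, hx, rfl⟩ _ ⟨y, hy, rfl⟩
  exact (hf.dist_le_mul x hx y hy).trans (by gcongr; exact hC hx hy)

theorem exists_lipschitzOnWith_mul_of_eq_zero {R : Type*} [SeminormedRing R] {f g : α → R}
    {s t : Set α} {Kf Kg : ℝ≥0} (hf : LipschitzOnWith Kf f (s ∩ t)) (hg : LipschitzOnWith Kg g s)
    (hfb : IsBounded (f '' (s ∩ t))) (hgb : IsBounded (g '' (s ∩ t)))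
    (hg0 : ∀ x ∈ s, x ∉ t → g x = 0) : ∃ K, LipschitzOnWith K (fun x => f x * g x) s := by
  obtain ⟨B, hB⟩ := hfb.exists_norm_le
  obtain ⟨M, hM⟩ := hgb.exists_norm_le
  have hB' : ∀ x ∈ s ∩ t, ‖f x‖ ≤ max B 0 := fun x hx => (hB _ ⟨x, hx, rfl⟩).trans (le_max_left _ _)
  have hM' : ∀ x ∈ s ∩ t, ‖g x‖ ≤ max M 0 := fun x hx => (hM _ ⟨x, hx, rfl⟩).trans (le_max_left _ _)
  set K : ℝ := max M 0 * Kf + max B 0 * Kg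
  -- `f x * g x - f y * g y = (f x - f y) * g x + f y * (g x - g y)`, and the first term
  -- vanishes unless `x ∈ t`.
  have key : ∀ x ∈ s, ∀ y ∈ s ∩ t, dist (f x * g x) (f y * g y) ≤ K * dist x y := by
    intro x hx y hy
    have h1 : ‖(f x - f y) * g x‖ ≤ max M 0 * Kf * dist x y := by
      by_cases hxt : x ∈ t
      · calc ‖(f x - f y) * g x‖ ≤ ‖f x - f y‖ * ‖g x‖ := norm_mul_le _ _
          _ ≤ Kf * dist x y * max M 0 := by
            rw [← dist_eq_norm]
            exact mul_le_mul (hf.dist_le_mul x ⟨hx, hxt⟩ y hy) (hM' x ⟨hx, hxt⟩)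
              (norm_nonneg _) (by positivity)
          _ = max M 0 * Kf * dist x y := by ring
      · rw [hg0 x hx hxt, mul_zero, norm_zero]; positivity
    have h2 : ‖f y * (g x - g y)‖ ≤ max B 0 * Kg * dist x y :=
      calc ‖f y * (g x - g y)‖ ≤ ‖f y‖ * ‖g x - g y‖ := norm_mul_le _ _
        _ ≤ max B 0 * (Kg * dist x y) := by
          rw [← dist_eq_norm]
          exact mul_le_mul (hB' y hy) (hg.dist_le_mul x hx y hy.1) dist_nonneg (by positivity)
        _ = max B 0 * Kg * dist x y := by ring
    calc dist (f x * g x) (f y * g y) = ‖(f x - f y) * g x + f y * (g x - g y)‖ := by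
          rw [dist_eq_norm]; congr 1; noncomm_ring
      _ ≤ K * dist x y := (norm_add_le _ _).trans (by linarith)
  refine ⟨K.toNNReal, LipschitzOnWith.of_dist_le' fun x hx y hy => ?_⟩
  by_cases hyt : y ∈ t
  · exact key x hx y ⟨hy, hyt⟩
  by_cases hxt : x ∈ t
  · rw [dist_comm, dist_comm x]; exact key y hy x ⟨hx, hxt⟩
  rw [hg0 x hx hxt, hg0 y hy hyt, mul_zero, mul_zero, dist_self]
  exact mul_nonneg (by positivity) dist_nonneg

theorem lipschitzWith_of_lipschitzOnWith_Iic_Ici {f : ℝ → β} {a : ℝ} {K : ℝ≥0}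
    (hl : LipschitzOnWith K f (Iic a)) (hr : LipschitzOnWith K f (Ici a)) : LipschitzWith K f := by
  refine LipschitzWith.of_dist_le_mul fun x y => ?_
  wlog hxy : x ≤ y generalizing x y
  · rw [dist_comm, dist_comm x]; exact this y x (le_of_not_ge hxy)
  rcases le_total y a with hya | hay
  · exact hl.dist_le_mul x (hxy.trans hya) y hya
  rcases le_total a x with hax | hxa
  · exact hr.dist_le_mul x hax y hay
  calc dist (f x) (f y) ≤ dist (f x) (f a) + dist (f a) (f y) := dist_triangle _ _ _
    _ ≤ K * dist x a + K * dist a y :=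
      add_le_add (hl.dist_le_mul x hxa a self_mem_Iic) (hr.dist_le_mul a self_mem_Ici y hay)
    _ = K * dist x y := by
      rw [Real.dist_eq, Real.dist_eq, Real.dist_eq, abs_of_nonpos (by linarith),
        abs_of_nonpos (by linarith), abs_of_nonpos (by linarith)]
      ring

theorem lipschitzWith_of_lipschitzOnWith_Iio_Ioi {f : ℝ → β} {a : ℝ} {K : ℝ≥0}
    (hl : LipschitzOnWith K f (Iio a)) (hr : LipschitzOnWith K f (Ioi a))
    (ha : ContinuousAt f a) : LipschitzWith K f := by
  have hf : Continuous f := continuous_iff_continuousAt.2 fun x => by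
    rcases lt_trichotomy x a with hx | rfl | hx
    · exact hl.continuousOn.continuousAt (Iio_mem_nhds hx)
    · exact ha
    · exact hr.continuousOn.continuousAt (Ioi_mem_nhds hx)
  refine lipschitzWith_of_lipschitzOnWith_Iic_Ici (a := a) ?_ ?_
  · simpa only [closure_Iio] using hl.closure hf.continuousOn
  · simpa only [closure_Ioi] using hr.closure hf.continuousOn

theorem lipschitzWith_invFun_add {E : Type*} [NormedAddCommGroup E] [CompleteSpace E]
    {g : E → E} {K : ℝ≥0} (hg : LipschitzWith K g) (hK : K < 1) :
    LipschitzWith (1 - K)⁻¹ (Function.invFun fun x => x + g x) := by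
  have hsurj : Function.Surjective fun x => x + g x := fun z => by
    -- `x + g x = z` is the fixed-point equation of the contraction `x ↦ z - g x`.
    have hcontr : ContractingWith K fun x => z - g x :=
      ⟨hK, by simpa using (LipschitzWith.const z).sub hg⟩
    exact ⟨_, eq_sub_iff_add_eq.1 (hcontr.fixedPoint_isFixedPt).symm⟩
  have hanti : AntilipschitzWith (1 - K)⁻¹ fun x => x + g x := by
    simpa using AntilipschitzWith.id.add_lipschitzWith hg (by simpa using hK)
  exact hanti.to_rightInverse (Function.rightInverse_invFun hsurj)

theorem exists_lipschitzOnWith_mul_one_add_add_mul_sq {s t : Set α} (ht : IsCompact t)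
    {μ σ a b : α → ℝ} {Kμ Kσ Ka Kb : ℝ≥0} (hμ : LipschitzOnWith Kμ μ s) (hσ : LipschitzWith Kσ σ)
    (ha : LipschitzWith Ka a) (hb : LipschitzWith Kb b) (ha0 : ∀ x ∉ t, a x = 0)
    (hb0 : ∀ x ∉ t, b x = 0) :
    ∃ K, LipschitzOnWith K (fun x => μ x * (1 + a x) + b x * σ x ^ 2) s := by
  have hbdd : ∀ {u : Set α}, u ⊆ t → IsBounded u := fun hu => ht.isBounded.subset hu
  obtain ⟨K₁, hμa⟩ := exists_lipschitzOnWith_mul_of_eq_zero (hμ.mono inter_subset_left)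
    ha.lipschitzOnWith ((hμ.mono inter_subset_left).isBounded_image (hbdd inter_subset_right))
    (ha.isBounded_image (hbdd inter_subset_right)) fun x _ hx => ha0 x hx
  obtain ⟨K₂, hσb⟩ := exists_lipschitzOnWith_mul_of_eq_zero (s := univ) hσ.lipschitzOnWith
    hb.lipschitzOnWith (hσ.isBounded_image (hbdd inter_subset_right))
    (hb.isBounded_image (hbdd inter_subset_right)) fun x _ hx => hb0 x hx
  rw [lipschitzOnWith_univ] at hσb
  obtain ⟨K₃, hσσb⟩ := exists_lipschitzOnWith_mul_of_eq_zero (s := s) hσ.lipschitzOnWith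
    hσb.lipschitzOnWith (hσ.isBounded_image (hbdd inter_subset_right))
    (hσb.isBounded_image (hbdd inter_subset_right)) fun x _ hx => by simp [hb0 x hx]
  refine ⟨Kμ + K₁ + K₃, ((hμ.add hμa).add hσσb).congr fun x _ => ?_⟩
  ring

end LipschitzTools

theorem hasDerivAt_of_hasDerivWithinAt_Iic_Ici {f : ℝ → ℝ} {f' a x : ℝ}
    (hl : x ≤ a → HasDerivWithinAt f f' (Iic a) x)
    (hr : a ≤ x → HasDerivWithinAt f f' (Ici a) x) : HasDerivAt f f' x := by
  rcases lt_trichotomy x a with hx | rfl | hx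
  · exact (hl hx.le).hasDerivAt (Iic_mem_nhds hx)
  · simpa [Iic_union_Ici, hasDerivWithinAt_univ] using (hl le_rfl).union (hr le_rfl)
  · exact (hr hx.le).hasDerivAt (Ici_mem_nhds hx)

theorem hasDerivAt_mul_abs (x : ℝ) : HasDerivAt (fun t => t * |t|) (2 * |x|) x := by
  refine hasDerivAt_of_hasDerivWithinAt_Iic_Ici (a := 0) (fun hx => ?_) (fun hx => ?_)
  · refine ((hasDerivAt_pow 2 x).neg.hasDerivWithinAt.congr_of_mem (fun t (ht : t ≤ 0) => ?_)
      hx).congr_deriv ?_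
    · rw [abs_of_nonpos ht, Pi.neg_apply]; ring
    · rw [abs_of_nonpos hx]; ring
  · refine ((hasDerivAt_pow 2 x).hasDerivWithinAt.congr_of_mem (fun t (ht : 0 ≤ t) => ?_)
      hx).congr_deriv ?_
    · rw [abs_of_nonneg ht]; ring
    · rw [abs_of_nonneg hx]; ring

theorem hasDerivAt_max_zero_pow (n : ℕ) (x : ℝ) :
    HasDerivAt (fun t => max t 0 ^ (n + 2)) ((n + 2) * max x 0 ^ (n + 1)) x := by
  refine hasDerivAt_of_hasDerivWithinAt_Iic_Ici (a := 0) (fun hx => ?_) (fun hx => ?_)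
  · refine ((hasDerivAt_const x (0 : ℝ)).hasDerivWithinAt.congr_of_mem
      (fun t (ht : t ≤ 0) => ?_) hx).congr_deriv ?_
    · simp [max_eq_right ht]
    · simp [max_eq_right hx]
  · refine ((hasDerivAt_pow (n + 2) x).hasDerivWithinAt.congr_of_mem
      (fun t (ht : 0 ≤ t) => ?_) hx).congr_deriv ?_
    · simp [max_eq_left ht]
    · simp [max_eq_left hx]

noncomputable def phiRoot (u : ℝ) : ℝ := max (1 - u ^ 2) 0

theorem phi_eq_phiRoot_pow (u : ℝ) : phi u = phiRoot u ^ 3 := by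
  unfold phi phiRoot
  split_ifs with hu
  · rw [max_eq_left (by nlinarith [abs_le.1 hu])]; ring
  · rw [max_eq_right (by nlinarith [abs_nonneg u, sq_abs u, not_le.1 hu])]; ring

theorem phiRoot_nonneg (u : ℝ) : 0 ≤ phiRoot u := le_max_right _ _

theorem phiRoot_le_one (u : ℝ) : phiRoot u ≤ 1 := max_le (by nlinarith) zero_le_one

theorem phiRoot_zero : phiRoot 0 = 1 := by simp [phiRoot]

theorem phiRoot_abs (u : ℝ) : phiRoot |u| = phiRoot u := by simp [phiRoot]

theorem phiRoot_eq_zero {u : ℝ} (hu : 1 ≤ |u|) : phiRoot u = 0 :=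
  max_eq_right (by nlinarith [sq_abs u])

theorem sq_mul_phiRoot (u : ℝ) : u ^ 2 * phiRoot u = (1 - phiRoot u) * phiRoot u := by
  rcases le_total 0 (1 - u ^ 2) with hu | hu
  · rw [phiRoot, max_eq_left hu]; ring
  · rw [phiRoot, max_eq_right hu]; ring

theorem lipschitzWith_phiRoot : LipschitzWith 2 phiRoot := by
  -- `phiRoot u = 1 - m u ^ 2` with the `1`-Lipschitz clamp `m u = min |u| 1 ∈ [0, 1]`.
  have hm : ∀ u, phiRoot u = 1 - min |u| 1 ^ 2 := fun u => by
    rcases le_total |u| 1 with hu | hu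
    · rw [min_eq_left hu, phiRoot, max_eq_left (by nlinarith [sq_abs u, abs_nonneg u]), sq_abs]
    · rw [min_eq_right hu, phiRoot_eq_zero hu]; ring
  refine LipschitzWith.of_dist_le_mul fun u v => ?_
  have hmuv : |min |u| 1 - min |v| 1| ≤ |u - v| :=
    (abs_min_sub_min_le_max _ _ _ _).trans (by simpa using abs_abs_sub_abs_le_abs_sub u v)
  have hsum : |min |u| 1 + min |v| 1| ≤ 2 := by
    rw [abs_le]; constructor <;>
      linarith [min_le_right |u| 1, min_le_right |v| 1, le_min (abs_nonneg u) zero_le_one,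
        le_min (abs_nonneg v) zero_le_one]
  rw [Real.dist_eq, Real.dist_eq, hm, hm,
    show 1 - min |u| 1 ^ 2 - (1 - min |v| 1 ^ 2)
      = -((min |u| 1 + min |v| 1) * (min |u| 1 - min |v| 1)) by ring, abs_neg, abs_mul]
  push_cast
  exact mul_le_mul hsum hmuv (abs_nonneg _) zero_le_two

theorem hasDerivAt_phiRoot_pow (n : ℕ) (u : ℝ) :
    HasDerivAt (fun u => phiRoot u ^ (n + 2)) ((n + 2) * phiRoot u ^ (n + 1) * (-2 * u)) u := by
  have hin : HasDerivAt (fun u : ℝ => 1 - u ^ 2) (-2 * u) u := by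
    simpa using ((hasDerivAt_pow 2 u).const_sub 1)
  exact (hasDerivAt_max_zero_pow n (1 - u ^ 2)).comp u hin

/- `psiDeriv` and `psiDeriv2` are `ψ'` and `ψ''` for `ψ u = u ^ 2 * phi u`, with `u ^ 2` eliminated
by `sq_mul_phiRoot`; `phibar ξ c x = ± c ^ 2 * ψ ((x - ξ) / c)` on either side of `ξ`. -/
noncomputable def psiDeriv (u : ℝ) : ℝ := 8 * u * phiRoot u ^ 3 - 6 * u * phiRoot u ^ 2

noncomputable def psiDeriv2 (u : ℝ) : ℝ :=
  24 * phiRoot u - 78 * phiRoot u ^ 2 + 56 * phiRoot u ^ 3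

theorem hasDerivAt_psiDeriv (u : ℝ) : HasDerivAt psiDeriv (psiDeriv2 u) u := by
  have h := (((hasDerivAt_id u).const_mul 8).mul (hasDerivAt_phiRoot_pow 1 u)).sub
    (((hasDerivAt_id u).const_mul 6).mul (hasDerivAt_phiRoot_pow 0 u))
  refine h.congr_deriv ?_
  simp only [id, psiDeriv2]
  push_cast
  linear_combination (24 - 48 * phiRoot u) * sq_mul_phiRoot u

theorem psiDeriv_zero : psiDeriv 0 = 0 := by simp [psiDeriv]

theorem psiDeriv2_zero : psiDeriv2 0 = 2 := by norm_num [psiDeriv2, phiRoot_zero]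

theorem psiDeriv_eq_zero {u : ℝ} (hu : 1 ≤ |u|) : psiDeriv u = 0 := by
  simp [psiDeriv, phiRoot_eq_zero hu]

theorem psiDeriv2_eq_zero {u : ℝ} (hu : 1 ≤ |u|) : psiDeriv2 u = 0 := by
  simp [psiDeriv2, phiRoot_eq_zero hu]

theorem abs_psiDeriv_le (u : ℝ) : |psiDeriv u| ≤ 6 := by
  have h0 := phiRoot_nonneg u
  have h1 := phiRoot_le_one u
  have hur : |u * phiRoot u| ≤ 1 := by
    rw [← sq_le_one_iff_abs_le_one]
    have h2 : (u * phiRoot u) ^ 2 = (1 - phiRoot u) * phiRoot u * phiRoot u := by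
      linear_combination phiRoot u * sq_mul_phiRoot u
    rw [h2]
    nlinarith [mul_nonneg (sub_nonneg.2 h1) h0]
  have hr : |4 * phiRoot u - 3| ≤ 3 := abs_le.2 ⟨by linarith, by linarith⟩
  calc |psiDeriv u| = 2 * |u * phiRoot u| * phiRoot u * |4 * phiRoot u - 3| := by
        rw [show psiDeriv u = 2 * (u * phiRoot u) * phiRoot u * (4 * phiRoot u - 3) by
          unfold psiDeriv; ring, abs_mul, abs_mul, abs_mul, abs_of_nonneg h0]
        norm_num
    _ ≤ 2 * 1 * 1 * 3 := by gcongr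
    _ = 6 := by norm_num

theorem abs_psiDeriv2_le (u : ℝ) : |psiDeriv2 u| ≤ 158 := by
  have h0 := phiRoot_nonneg u
  have h1 := phiRoot_le_one u
  unfold psiDeriv2
  rw [abs_le]; constructor <;> nlinarith [pow_le_one₀ h0 h1 (n := 2), pow_le_one₀ h0 h1 (n := 3),
    pow_nonneg h0 2, pow_nonneg h0 3]

theorem lipschitzWith_psiDeriv : LipschitzWith 158 psiDeriv := by
  refine lipschitzWith_of_nnnorm_deriv_le (fun u => (hasDerivAt_psiDeriv u).differentiableAt)
    fun u => ?_
  rw [(hasDerivAt_psiDeriv u).deriv, ← NNReal.coe_le_coe, coe_nnnorm, Real.norm_eq_abs]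
  exact abs_psiDeriv2_le u

theorem lipschitzWith_psiDeriv2 : LipschitzWith 696 psiDeriv2 := by
  refine LipschitzWith.of_dist_le_mul fun u v => ?_
  have huv := lipschitzWith_phiRoot.dist_le_mul u v
  rw [Real.dist_eq, Real.dist_eq] at huv ⊢
  -- `psiDeriv2 = P ∘ phiRoot` with a polynomial `P` that is `348`-Lipschitz on `[0, 1]`.
  have hfac : psiDeriv2 u - psiDeriv2 v = (24 - 78 * (phiRoot u + phiRoot v)
      + 56 * (phiRoot u ^ 2 + phiRoot u * phiRoot v + phiRoot v ^ 2))
      * (phiRoot u - phiRoot v) := by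
    unfold psiDeriv2; ring
  have hP : |24 - 78 * (phiRoot u + phiRoot v)
      + 56 * (phiRoot u ^ 2 + phiRoot u * phiRoot v + phiRoot v ^ 2)| ≤ 348 := by
    have h0 := phiRoot_nonneg u
    have h0' := phiRoot_nonneg v
    have h1 := phiRoot_le_one u
    have h1' := phiRoot_le_one v
    exact abs_le.2 ⟨by nlinarith [mul_le_one₀ h1 h0' h1', mul_nonneg h0 h0'],
      by nlinarith [mul_le_one₀ h1 h0 h1, mul_le_one₀ h1 h0' h1', mul_le_one₀ h1' h0' h1']⟩
  rw [hfac, abs_mul]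
  calc _ ≤ 348 * (2 * |u - v|) := by gcongr; exact_mod_cast huv
    _ = (696 : ℝ≥0) * |u - v| := by push_cast; ring

theorem lipschitzWith_abs_sub_div (ξ : ℝ) {c : ℝ} (hc : 0 < c) :
    LipschitzWith c⁻¹.toNNReal fun x => |x - ξ| / c := by
  refine LipschitzWith.of_dist_le' fun x y => ?_
  rw [Real.dist_eq, Real.dist_eq, div_sub_div_same, abs_div, abs_of_pos hc, div_eq_inv_mul]
  exact mul_le_mul_of_nonneg_left (by simpa using abs_abs_sub_abs_le_abs_sub (x - ξ) (y - ξ))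
    (inv_nonneg.2 hc.le)

theorem one_le_abs_abs_sub_div {ξ c x : ℝ} (hc : 0 < c) (hx : x ∉ closedBall ξ c) :
    1 ≤ |(|x - ξ| / c)| := by
  rw [mem_closedBall, not_le, Real.dist_eq] at hx
  rw [abs_div, abs_abs, abs_of_pos hc, one_le_div hc]
  exact hx.le

section phibar

variable (ξ : ℝ) {c : ℝ}

theorem hasDerivAt_phibar (hc : 0 < c) (x : ℝ) :
    HasDerivAt (phibar ξ c) (c * psiDeriv (|x - ξ| / c)) x := by
  have hsub : HasDerivAt (fun x => x - ξ) 1 x := (hasDerivAt_id x).sub_const ξ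
  have h1 : HasDerivAt (fun x => (x - ξ) * |x - ξ|) (2 * |x - ξ|) x :=
    (hasDerivAt_mul_abs (x - ξ)).comp_sub_const x ξ
  have h2 := (hasDerivAt_phiRoot_pow 1 ((x - ξ) / c)).comp x (hsub.div_const c)
  have hφ : phibar ξ c = fun x => (x - ξ) * |x - ξ| * phiRoot ((x - ξ) / c) ^ (1 + 2) :=
    funext fun x => by rw [phibar, phi_eq_phiRoot_pow]
  rw [hφ]
  refine (h1.mul h2).congr_deriv ?_
  obtain ⟨u, hu⟩ : ∃ u, x - ξ = c * u := ⟨(x - ξ) / c, by field_simp⟩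
  rw [hu, mul_div_cancel_left₀ _ hc.ne', abs_mul, abs_of_pos hc, mul_div_cancel_left₀ _ hc.ne',
    psiDeriv, phiRoot_abs, Function.comp_apply, hu, mul_div_cancel_left₀ _ hc.ne']
  field_simp
  push_cast
  linear_combination (-6 * |u| * phiRoot u) * sq_mul_phiRoot u

theorem deriv_phibar (hc : 0 < c) : deriv (phibar ξ c) = fun x => c * psiDeriv (|x - ξ| / c) :=
  funext fun x => (hasDerivAt_phibar ξ hc x).deriv

theorem deriv_deriv_phibar (hc : 0 < c) {x : ℝ} (hx : x ≠ ξ) :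
    deriv (deriv (phibar ξ c)) x = SignType.sign (x - ξ) * psiDeriv2 (|x - ξ| / c) := by
  have habs : HasDerivAt (fun x => |x - ξ|) (SignType.sign (x - ξ)) x :=
    (hasDerivAt_abs (sub_ne_zero.2 hx)).comp_sub_const x ξ
  rw [deriv_phibar ξ hc]
  refine (((hasDerivAt_psiDeriv _).comp x (habs.div_const c)).const_mul c).deriv.trans ?_
  field_simp

theorem lipschitzWith_phibar (hc : 0 < c) : LipschitzWith (6 * c).toNNReal (phibar ξ c) := by
  refine lipschitzWith_of_nnnorm_deriv_le (fun x => (hasDerivAt_phibar ξ hc x).differentiableAt)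
    fun x => ?_
  rw [deriv_phibar ξ hc, ← NNReal.coe_le_coe, coe_nnnorm, Real.norm_eq_abs,
    Real.coe_toNNReal _ (by positivity), abs_mul, abs_of_pos hc]
  nlinarith [abs_psiDeriv_le (|x - ξ| / c)]

theorem lipschitzWith_deriv_phibar (hc : 0 < c) : LipschitzWith 158 (deriv (phibar ξ c)) := by
  have hK : ‖c‖₊ * (158 * c⁻¹.toNNReal) = 158 := by
    ext; simp [abs_of_pos hc, Real.coe_toNNReal _ (inv_nonneg.2 hc.le)]; field_simp
  rw [deriv_phibar ξ hc, ← hK]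
  exact (lipschitzWith_smul c).comp (lipschitzWith_psiDeriv.comp (lipschitzWith_abs_sub_div ξ hc))

end phibar

/-- On either side of `ξ`, `h` is `sideDrift μ σ ξ c α (±α / 2)`, by `deriv_deriv_phibar`. -/
noncomputable def sideDrift (μ σ : ℝ → ℝ) (ξ c α β x : ℝ) : ℝ :=
  μ x * (1 + α * deriv (phibar ξ c) x) + β * psiDeriv2 (|x - ξ| / c) * σ x ^ 2

section sideDrift

variable {μ σ : ℝ → ℝ} (ξ : ℝ) {c : ℝ}

theorem exists_lipschitzOnWith_sideDrift (hc : 0 < c) (α β : ℝ) {s : Set ℝ} {Kμ Kσ : ℝ≥0}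
    (hμ : LipschitzOnWith Kμ μ s) (hσ : LipschitzWith Kσ σ) :
    ∃ K, LipschitzOnWith K (sideDrift μ σ ξ c α β) s :=
  exists_lipschitzOnWith_mul_one_add_add_mul_sq (isCompact_closedBall ξ c) hμ hσ
    ((lipschitzWith_smul α).comp (lipschitzWith_deriv_phibar ξ hc))
    ((lipschitzWith_smul β).comp (lipschitzWith_psiDeriv2.comp (lipschitzWith_abs_sub_div ξ hc)))
    (fun x hx => by simp [deriv_phibar ξ hc, psiDeriv_eq_zero (one_le_abs_abs_sub_div hc hx)])
    (fun x hx => by simp [psiDeriv2_eq_zero (one_le_abs_abs_sub_div hc hx)])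

theorem tendsto_sideDrift (hc : 0 < c) (α β : ℝ) {l : Filter ℝ} {m : ℝ} (hl : l ≤ 𝓝 ξ)
    (hμ : Tendsto μ l (𝓝 m)) (hσ : ContinuousAt σ ξ) :
    Tendsto (sideDrift μ σ ξ c α β) l (𝓝 (m + 2 * β * σ ξ ^ 2)) := by
  have ha : Tendsto (deriv (phibar ξ c)) l (𝓝 0) := by
    simpa [deriv_phibar ξ hc, psiDeriv_zero] using
      ((lipschitzWith_deriv_phibar ξ hc).continuous.tendsto ξ).mono_left hl
  have hb : Tendsto (fun x => psiDeriv2 (|x - ξ| / c)) l (𝓝 2) := by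
    simpa [psiDeriv2_zero, Function.comp_def] using ((lipschitzWith_psiDeriv2.comp
      (lipschitzWith_abs_sub_div ξ hc)).continuous.tendsto ξ).mono_left hl
  have hlim : Tendsto (sideDrift μ σ ξ c α β) l (𝓝 (m * (1 + α * 0) + β * 2 * σ ξ ^ 2)) :=
    (hμ.mul (tendsto_const_nhds.add (ha.const_mul α))).add
      ((hb.const_mul β).mul ((hσ.tendsto.mono_left hl).pow 2))
  convert hlim using 2
  ring

end sideDrift

theorem lipschitzWith_invFun_transformG (ξ : ℝ) {α c : ℝ} (hc : 0 < c) (hαc : 6 * |α| * c < 1) :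
    LipschitzWith (1 - ‖α‖₊ * (6 * c).toNNReal)⁻¹ (Function.invFun (transformG ξ α c)) := by
  refine lipschitzWith_invFun_add ((lipschitzWith_smul α).comp (lipschitzWith_phibar ξ hc)) ?_
  rw [← NNReal.coe_lt_coe]
  push_cast
  rw [Real.coe_toNNReal _ (by positivity), Real.norm_eq_abs]
  linarith

/-- the transformed drift `μ̃ = h ∘ G⁻¹`, where
`h(x) = μ(x)(1 + α φ̄'(x)) + (1/2) α φ̄''(x) σ(x)²` for `x ≠ ξ` and
`h(ξ) = (μ(ξ+) + μ(ξ-))/2`, is Lipschitz continuous on `ℝ`. -/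
theorem transformed_drift_lipschitz
    (ξ : ℝ) (μ σ : ℝ → ℝ) (Lμ : ℝ)
    (hμleft : ∀ x ∈ Set.Iio ξ, ∀ y ∈ Set.Iio ξ, |μ x - μ y| ≤ Lμ * |x - y|)
    (hμright : ∀ x ∈ Set.Ioi ξ, ∀ y ∈ Set.Ioi ξ, |μ x - μ y| ≤ Lμ * |x - y|)
    (μplus μminus : ℝ)
    (hplus : Tendsto μ (nhdsWithin ξ (Set.Ioi ξ)) (nhds μplus))
    (hminus : Tendsto μ (nhdsWithin ξ (Set.Iio ξ)) (nhds μminus))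
    (Lσ : ℝ≥0) (hσ : LipschitzWith Lσ σ) (hσξ : σ ξ ≠ 0)
    (α : ℝ) (hα : α = (μminus - μplus) / (2 * (σ ξ) ^ 2))
    (c : ℝ) (hc : 0 < c) (hαc : 6 * |α| * c < 1)
    (h : ℝ → ℝ)
    (hh : ∀ x : ℝ, x ≠ ξ →
      h x = μ x * (1 + α * deriv (phibar ξ c) x)
        + (1 / 2) * α * deriv (deriv (phibar ξ c)) x * (σ x) ^ 2)
    (hhξ : h ξ = (μplus + μminus) / 2) :
    ∃ K : ℝ≥0, LipschitzWith K (h ∘ Function.invFun (transformG ξ α c)) := by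
  have hR : EqOn h (sideDrift μ σ ξ c α (α / 2)) (Ioi ξ) := fun x (hx : ξ < x) => by
    rw [hh x hx.ne', deriv_deriv_phibar ξ hc hx.ne', sign_pos (sub_pos.2 hx), sideDrift]
    simp only [SignType.coe_one]; ring
  have hL : EqOn h (sideDrift μ σ ξ c α (-(α / 2))) (Iio ξ) := fun x (hx : x < ξ) => by
    rw [hh x hx.ne, deriv_deriv_phibar ξ hc hx.ne, sign_neg (sub_neg.2 hx), sideDrift]
    simp only [SignType.coe_neg_one]; ring
  obtain ⟨KR, hKR⟩ := exists_lipschitzOnWith_sideDrift ξ hc α (α / 2)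
    (LipschitzOnWith.of_dist_le' hμright) hσ
  obtain ⟨KL, hKL⟩ := exists_lipschitzOnWith_sideDrift ξ hc α (-(α / 2))
    (LipschitzOnWith.of_dist_le' hμleft) hσ
  -- The choice of `α` makes the jumps of `μ` and of `φ̄''` at `ξ` cancel in `h`.
  have hjump : α * σ ξ ^ 2 = (μminus - μplus) / 2 := by rw [hα]; field_simp
  have hcont : ContinuousAt h ξ := by
    refine continuousAt_iff_continuous_left'_right'.2 ⟨?_, ?_⟩
    · have := (tendsto_sideDrift ξ hc α _ nhdsWithin_le_nhds hminus
        hσ.continuous.continuousAt).congr' (eventuallyEq_nhdsWithin_of_eqOn hL).symm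
      rwa [show μminus + 2 * -(α / 2) * σ ξ ^ 2 = h ξ by
        rw [hhξ]; linear_combination -hjump] at this
    · have := (tendsto_sideDrift ξ hc α _ nhdsWithin_le_nhds hplus
        hσ.continuous.continuousAt).congr' (eventuallyEq_nhdsWithin_of_eqOn hR).symm
      rwa [show μplus + 2 * (α / 2) * σ ξ ^ 2 = h ξ by
        rw [hhξ]; linear_combination hjump] at this
  have hlip : LipschitzWith (max KL KR) h := lipschitzWith_of_lipschitzOnWith_Iio_Ioi
    ((hKL.congr hL.symm).weaken le_sup_left) ((hKR.congr hR.symm).weaken le_sup_right) hcont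
  exact ⟨_, hlip.comp (lipschitzWith_invFun_transformG ξ hc hαc)⟩
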